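/- On the manifold with coordinates (x, u, u₁, w), u > 0, let Y₀ = ∂_x + u₁∂_u + f∂_{u₁} + (x/u²)∂_w with f = -x²/(4u³) - u - 1/(2u), let Y₁ be the vector field with components determined by generating functions φ¹ = u e^w, φ² = -2e^w (i.e. Y₁ = u e^w ∂_u + Ỹ₀(u e^w) ∂_{u₁} - 2e^w ∂_w where Ỹ₀ = Y₀), let Y₂ = ∂_w and Y₃ = ∂_x - (1/(2u))∂_{u₁}. Then [Y₁, Y₀] is proportional to Y₀, [Y₂, Y₀] ∈ span(Y₀, Y₁), [Y₂, Y₁] ∈ span(Y₀, Y₁), and [Y₃, Y_j] ∈ span(Y₀, Y₁, Y₂) for j = 0, 1, 2; i.e. {Y₁, Y₂, Y₃} is a solvable structure for span(Y₀). -/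

import Mathlib

/-! A direct computation. Once `Y₀(u e^w)` in `Y₁` is evaluated, all four fields have explicit
Jacobians on `u ≠ 0`, and the brackets come out as `[Y₁,Y₀] = [Y₂,Y₀] = [Y₃,Y₁] = [Y₃,Y₂] = 0`,
`[Y₂,Y₁] = Y₁` and `[Y₃,Y₀] = -e^{-w}/(2u²) • Y₁`. -/

/-- Lie bracket of vector fields on `ℝⁿ`. -/
noncomputable def vbracket {n : ℕ} (X Y : (Fin n → ℝ) → (Fin n → ℝ)) :
    (Fin n → ℝ) → (Fin n → ℝ) :=
  fun p => fderiv ℝ Y p (X p) - fderiv ℝ X p (Y p)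

namespace Ex2Solv

/-- `Y₀ = ∂_x + u₁∂_u + f∂_{u₁} + (x/u²)∂_w` with `f = -x²/(4u³) - u - 1/(2u)`, on
coordinates `p = (x, u, u₁, w)`. -/
noncomputable def Y₀ (p : Fin 4 → ℝ) : Fin 4 → ℝ :=
  ![1, p 2, -(p 0) ^ 2 / (4 * (p 1) ^ 3) - p 1 - 1 / (2 * p 1), p 0 / (p 1) ^ 2]

/-- The nonlocal symmetry `Y₁ = u e^w ∂_u + Y₀(u e^w) ∂_{u₁} - 2e^w ∂_w` with
generating functions `φ¹ = u e^w`, `φ² = -2e^w`. -/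
noncomputable def Y₁ (p : Fin 4 → ℝ) : Fin 4 → ℝ :=
  ![0, p 1 * Real.exp (p 3),
    fderiv ℝ (fun q : Fin 4 → ℝ => q 1 * Real.exp (q 3)) p (Y₀ p),
    -2 * Real.exp (p 3)]

/-- `Y₂ = ∂_w`. -/
noncomputable def Y₂ (_ : Fin 4 → ℝ) : Fin 4 → ℝ := ![0, 0, 0, 1]

/-- `Y₃ = ∂_x - (1/(2u))∂_{u₁}`. -/
noncomputable def Y₃ (p : Fin 4 → ℝ) : Fin 4 → ℝ := ![1, 0, -1 / (2 * p 1), 0]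

end Ex2Solv

open ContinuousLinearMap

theorem HasFDerivAt.div {𝕜 E : Type*} [NontriviallyNormedField 𝕜] [NormedAddCommGroup E]
    [NormedSpace 𝕜 E] {c d : E → 𝕜} {c' d' : StrongDual 𝕜 E} {x : E}
    (hc : HasFDerivAt c c' x) (hd : HasFDerivAt d d' x) (hx : d x ≠ 0) :
    HasFDerivAt (fun y => c y / d y) ((d x)⁻¹ • c' - (c x / d x ^ 2) • d') x := by
  simp only [div_eq_mul_inv]
  refine (hc.fun_mul ((hasFDerivAt_inv hx).comp x hd)).congr_fderiv ?_
  ext v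
  simp
  ring

theorem hasFDerivAt_vecCons_four {𝕜 E : Type*} [NontriviallyNormedField 𝕜]
    [NormedAddCommGroup E] [NormedSpace 𝕜 E] {f₀ f₁ f₂ f₃ : E → 𝕜}
    {L₀ L₁ L₂ L₃ : StrongDual 𝕜 E} {x : E}
    (h₀ : HasFDerivAt f₀ L₀ x) (h₁ : HasFDerivAt f₁ L₁ x) (h₂ : HasFDerivAt f₂ L₂ x)
    (h₃ : HasFDerivAt f₃ L₃ x) :
    HasFDerivAt (fun y => ![f₀ y, f₁ y, f₂ y, f₃ y]) (pi ![L₀, L₁, L₂, L₃]) x := by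
  refine hasFDerivAt_pi'.2 fun i => ?_
  fin_cases i <;> simpa

theorem vbracket_eq_of_hasFDerivAt {n : ℕ} {X Y : (Fin n → ℝ) → Fin n → ℝ}
    {X' Y' : (Fin n → ℝ) →L[ℝ] Fin n → ℝ} {p : Fin n → ℝ} (hX : HasFDerivAt X X' p)
    (hY : HasFDerivAt Y Y' p) : vbracket X Y p = Y' (X p) - X' (Y p) := by
  rw [vbracket, hX.fderiv, hY.fderiv]

namespace Ex2Solv

open Real

variable {p : Fin 4 → ℝ}

theorem hasFDerivAt_Y₀ (hu : p 1 ≠ 0) :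
    HasFDerivAt Y₀ (pi (R := ℝ) (M := Fin 4 → ℝ) ![0, proj 2,
      (-p 0 / (2 * p 1 ^ 3)) • proj 0
        + (3 * p 0 ^ 2 / (4 * p 1 ^ 4) - 1 + 1 / (2 * p 1 ^ 2)) • proj 1,
      (1 / p 1 ^ 2) • proj 0 - (2 * p 0 / p 1 ^ 3) • proj 1]) p := by
  have hx := hasFDerivAt_apply (𝕜 := ℝ) 0 p
  have hu' := hasFDerivAt_apply (𝕜 := ℝ) 1 p
  have hf := (((hx.pow 2).neg.div ((hu'.pow 3).const_mul 4) (by positivity)).sub hu').sub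
    ((hasFDerivAt_const 1 p).div (hu'.const_mul 2) (by positivity))
  have hg := hx.div (hu'.pow 2) (by positivity)
  refine (hasFDerivAt_vecCons_four (hasFDerivAt_const 1 p) (hasFDerivAt_apply 2 p) hf
    hg).congr_fderiv ?_
  ext v i
  fin_cases i <;> simp <;> field_simp
  ring

theorem Y₁_eq : Y₁ = fun q : Fin 4 → ℝ =>
    ![0, q 1 * exp (q 3), exp (q 3) * q 2 + exp (q 3) * q 0 / q 1, -2 * exp (q 3)] := by
  funext q
  have h : HasFDerivAt (fun r : Fin 4 → ℝ => r 1 * exp (r 3)) _ q :=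
    (hasFDerivAt_apply 1 q).mul (hasFDerivAt_apply 3 q).exp
  simp only [Y₁, h.fderiv]
  by_cases hu : q 1 = 0
  · simp [Y₀, hu]
  · simp [Y₀]
    field_simp
    ring

theorem hasFDerivAt_Y₁ (hu : p 1 ≠ 0) :
    HasFDerivAt Y₁ (pi (R := ℝ) (M := Fin 4 → ℝ) ![0,
      exp (p 3) • proj 1 + (p 1 * exp (p 3)) • proj 3,
      (exp (p 3) / p 1) • proj 0 - (exp (p 3) * p 0 / p 1 ^ 2) • proj 1 + exp (p 3) • proj 2
        + (exp (p 3) * p 2 + exp (p 3) * p 0 / p 1) • proj 3,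
      (-2 * exp (p 3)) • proj 3]) p := by
  have he := (hasFDerivAt_apply (𝕜 := ℝ) 3 p).exp
  have h₁ := (hasFDerivAt_apply (𝕜 := ℝ) 1 p).fun_mul he
  have h₂ := (he.fun_mul (hasFDerivAt_apply 2 p)).fun_add
    ((he.fun_mul (hasFDerivAt_apply 0 p)).div (hasFDerivAt_apply 1 p) hu)
  rw [Y₁_eq]
  refine (hasFDerivAt_vecCons_four (hasFDerivAt_const 0 p) h₁ h₂
    (he.const_mul (-2))).congr_fderiv ?_
  ext v i
  fin_cases i <;> simp <;> field_simp <;> ring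

theorem hasFDerivAt_Y₂ : HasFDerivAt Y₂ (0 : (Fin 4 → ℝ) →L[ℝ] Fin 4 → ℝ) p :=
  hasFDerivAt_const _ _

theorem hasFDerivAt_Y₃ (hu : p 1 ≠ 0) :
    HasFDerivAt Y₃ (pi (R := ℝ) (M := Fin 4 → ℝ) ![0, 0, (1 / (2 * p 1 ^ 2)) • proj 1, 0]) p := by
  have h := (hasFDerivAt_const (-1) p).div ((hasFDerivAt_apply (𝕜 := ℝ) 1 p).const_mul 2)
    (by positivity)
  refine (hasFDerivAt_vecCons_four (hasFDerivAt_const 1 p) (hasFDerivAt_const 0 p) h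
    (hasFDerivAt_const 0 p)).congr_fderiv ?_
  ext v i
  fin_cases i <;> simp
  field_simp

theorem vbracket_Y₁_Y₀ (hu : p 1 ≠ 0) : vbracket Y₁ Y₀ p = 0 := by
  rw [vbracket_eq_of_hasFDerivAt (hasFDerivAt_Y₁ hu) (hasFDerivAt_Y₀ hu), Y₁_eq]
  ext i
  fin_cases i <;> simp [Y₀] <;> field_simp <;> ring

theorem vbracket_Y₂_Y₀ (hu : p 1 ≠ 0) : vbracket Y₂ Y₀ p = 0 := by
  rw [vbracket_eq_of_hasFDerivAt hasFDerivAt_Y₂ (hasFDerivAt_Y₀ hu)]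
  ext i
  fin_cases i <;> simp [Y₂]

theorem vbracket_Y₂_Y₁ (hu : p 1 ≠ 0) : vbracket Y₂ Y₁ p = Y₁ p := by
  rw [vbracket_eq_of_hasFDerivAt hasFDerivAt_Y₂ (hasFDerivAt_Y₁ hu), Y₁_eq]
  ext i
  fin_cases i <;> simp [Y₂]

theorem vbracket_Y₃_Y₀ (hu : p 1 ≠ 0) :
    vbracket Y₃ Y₀ p = (-exp (-p 3) / (2 * p 1 ^ 2)) • Y₁ p := by
  rw [vbracket_eq_of_hasFDerivAt (hasFDerivAt_Y₃ hu) (hasFDerivAt_Y₀ hu), Y₁_eq]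
  ext i
  fin_cases i <;> simp [Y₀, Y₃, exp_neg] <;> field_simp
  ring

theorem vbracket_Y₃_Y₁ (hu : p 1 ≠ 0) : vbracket Y₃ Y₁ p = 0 := by
  rw [vbracket_eq_of_hasFDerivAt (hasFDerivAt_Y₃ hu) (hasFDerivAt_Y₁ hu), Y₁_eq]
  ext i
  fin_cases i <;> simp [Y₃]
  field_simp
  ring

theorem vbracket_Y₃_Y₂ (hu : p 1 ≠ 0) : vbracket Y₃ Y₂ p = 0 := by
  rw [vbracket_eq_of_hasFDerivAt (hasFDerivAt_Y₃ hu) hasFDerivAt_Y₂]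
  ext i
  fin_cases i <;> simp [Y₂]

end Ex2Solv

open Ex2Solv in
/-- On the region `u > 0` of the manifold with coordinates `(x, u, u₁, w)`:
`[Y₁, Y₀]` is proportional to `Y₀`, `[Y₂, Y₀]` and `[Y₂, Y₁]` lie in `span(Y₀, Y₁)`,
and `[Y₃, Y_j] ∈ span(Y₀, Y₁, Y₂)` for `j = 0, 1, 2`; i.e. `{Y₁, Y₂, Y₃}` is a
solvable structure for `span(Y₀)`. -/
theorem stmt_10 (p : Fin 4 → ℝ) (hu : p 1 > 0) :
    vbracket Y₁ Y₀ p ∈ Submodule.span ℝ {Y₀ p} ∧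
    vbracket Y₂ Y₀ p ∈ Submodule.span ℝ {Y₀ p, Y₁ p} ∧
    vbracket Y₂ Y₁ p ∈ Submodule.span ℝ {Y₀ p, Y₁ p} ∧
    vbracket Y₃ Y₀ p ∈ Submodule.span ℝ {Y₀ p, Y₁ p, Y₂ p} ∧
    vbracket Y₃ Y₁ p ∈ Submodule.span ℝ {Y₀ p, Y₁ p, Y₂ p} ∧
    vbracket Y₃ Y₂ p ∈ Submodule.span ℝ {Y₀ p, Y₁ p, Y₂ p} := by
  have hu : p 1 ≠ 0 := hu.ne'
  exact ⟨vbracket_Y₁_Y₀ hu ▸ zero_mem _, vbracket_Y₂_Y₀ hu ▸ zero_mem _,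
    vbracket_Y₂_Y₁ hu ▸ Submodule.subset_span (by simp),
    vbracket_Y₃_Y₀ hu ▸ Submodule.smul_mem _ _ (Submodule.subset_span (by simp)),
    vbracket_Y₃_Y₁ hu ▸ zero_mem _, vbracket_Y₃_Y₂ hu ▸ zero_mem _⟩
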